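/- arXiv:1203.5666 — 5 statements merged into one kernel-verified Lean document; each statement's English description precedes it below -/
import Mathlib

section
/- Estimate (3.14): Let K ⊆ ℝⁿ be a nonempty compact set with nonempty frontier ∂K and oriented distance function b_K, let ε₀ > 0, and let t ≥ 0. Let σ be a functional from paths on [0,t] into n×d real matrices (with the operator norm) that is sup-Lipschitz with constant C ≥ 0. Assume: (i) for every γ ∈ Λ_{∂K,t}, b_K is differentiable at γ(t) and σ(γ)ᵀ ∇b_K(γ(t)) = 0; (ii) χ ∈ Λ_{K̊,t} is a path with b_K(χ(t)) < ε₀, and b_K is differentiable at χ(t); (iii) there exists x̄ ∈ ∂K with ‖χ(t) − x̄‖ = dist(χ(t), ∂K), ∇b_K(χ(t)) = ∇b_K(x̄), and ‖∇b_K(x̄)‖ ≤ 1 (the projection property of compact C^{2,1} domains). Then ‖σ(χ)ᵀ ∇b_K(χ(t))‖ ≤ C · b_K(χ(t)). -/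
noncomputable section
open Classical in
/-- The oriented distance function `b_K` from the frontier of `K`:
`b_K(x) = dist(x, ∂K)` if `x ∈ K`, and `b_K(x) = -dist(x, ∂K)` otherwise. -/
def orientedDist {n : ℕ} (K : Set (EuclideanSpace ℝ (Fin n)))
    (x : EuclideanSpace ℝ (Fin n)) : ℝ :=
  if x ∈ K then Metric.infDist x (frontier K) else -Metric.infDist x (frontier K)

/-- Estimate (3.14): if the sup-Lipschitz (constant `C`) matrix-valued path functional `σ`
(`n×d` matrices being identified with continuous linear maps `ℝᵈ → ℝⁿ`, with the operator
norm, and the transpose with the adjoint) satisfies `σ(γ)ᵀ ∇b_K(γ(t)) = 0` for every path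
`γ ∈ Λ_{∂K,t}`, then for any path `χ ∈ Λ_{K̊,t}` with `b_K(χ(t)) < ε₀` admitting a nearest
boundary point `x̄` with `∇b_K(χ(t)) = ∇b_K(x̄)` and `‖∇b_K(x̄)‖ ≤ 1`, one has
`‖σ(χ)ᵀ ∇b_K(χ(t))‖ ≤ C · b_K(χ(t))`. -/
theorem estimate_3_14
    (n d : ℕ)
    (K : Set (EuclideanSpace ℝ (Fin n)))
    (hKne : K.Nonempty) (hKcpt : IsCompact K) (hfr : (frontier K).Nonempty)
    (ε₀ : ℝ) (hε₀ : 0 < ε₀) (t : ℝ) (ht : 0 ≤ t)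
    (σ : (ℝ → EuclideanSpace ℝ (Fin n)) →
      (EuclideanSpace ℝ (Fin d) →L[ℝ] EuclideanSpace ℝ (Fin n)))
    (C : ℝ) (hC : 0 ≤ C)
    (hLip : ∀ (χ χ' : ℝ → EuclideanSpace ℝ (Fin n)) (M : ℝ), 0 ≤ M →
      (∀ s ∈ Set.Icc 0 t, ‖χ s - χ' s‖ ≤ M) → ‖σ χ - σ χ'‖ ≤ C * M)
    (hbdry : ∀ γ : ℝ → EuclideanSpace ℝ (Fin n),
      (∀ s ∈ Set.Ico 0 t, γ s ∈ interior K) → γ t ∈ frontier K →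
      DifferentiableAt ℝ (orientedDist K) (γ t) ∧
      (ContinuousLinearMap.adjoint (σ γ)) (gradient (orientedDist K) (γ t)) = 0)
    (χ : ℝ → EuclideanSpace ℝ (Fin n))
    (hχ : ∀ s ∈ Set.Icc 0 t, χ s ∈ interior K)
    (hχε : orientedDist K (χ t) < ε₀)
    (hχdiff : DifferentiableAt ℝ (orientedDist K) (χ t))
    (hproj : ∃ xb ∈ frontier K, ‖χ t - xb‖ = Metric.infDist (χ t) (frontier K) ∧
      gradient (orientedDist K) (χ t) = gradient (orientedDist K) xb ∧
      ‖gradient (orientedDist K) xb‖ ≤ 1) :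
    ‖(ContinuousLinearMap.adjoint (σ χ)) (gradient (orientedDist K) (χ t))‖ ≤
      C * orientedDist K (χ t) := by
  classical
  obtain ⟨xb, hxb, hdist, hgrad, hgrad1⟩ := hproj
  set γ : ℝ → EuclideanSpace ℝ (Fin n) := fun s => if s = t then xb else χ s with hγdef
  have hγt : γ t = xb := by simp [hγdef]
  have hγint : ∀ s ∈ Set.Ico 0 t, γ s ∈ interior K := by
    intro s hs
    have hne : s ≠ t := ne_of_lt hs.2
    simp only [hγdef, hne, if_neg]
    exact hχ s ⟨hs.1, le_of_lt hs.2⟩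
  obtain ⟨-, hzero⟩ := hbdry γ hγint (by rw [hγt]; exact hxb)
  set v := gradient (orientedDist K) (χ t) with hv
  have hvxb : v = gradient (orientedDist K) (γ t) := by rw [hγt, hgrad]
  have hχtK : χ t ∈ K := interior_subset (hχ t ⟨ht, le_refl t⟩)
  have hb : orientedDist K (χ t) = Metric.infDist (χ t) (frontier K) := by
    simp [orientedDist, hχtK]
  have hM : ∀ s ∈ Set.Icc 0 t, ‖χ s - γ s‖ ≤ Metric.infDist (χ t) (frontier K) := by
    intro s hs
    by_cases hse : s = t
    · subst hse
      rw [hγt, hdist]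
    · simp [hγdef, hse, Metric.infDist_nonneg]
  have hnorm : ‖σ χ - σ γ‖ ≤ C * Metric.infDist (χ t) (frontier K) :=
    hLip χ γ _ Metric.infDist_nonneg hM
  have key : (ContinuousLinearMap.adjoint (σ χ)) v =
      (ContinuousLinearMap.adjoint (σ χ - σ γ)) v := by
    rw [map_sub]
    simp only [ContinuousLinearMap.sub_apply]
    rw [show (ContinuousLinearMap.adjoint (σ γ)) v = 0 from hvxb ▸ hzero, sub_zero]
  calc ‖(ContinuousLinearMap.adjoint (σ χ)) v‖
      = ‖(ContinuousLinearMap.adjoint (σ χ - σ γ)) v‖ := by rw [key]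
    _ ≤ ‖ContinuousLinearMap.adjoint (σ χ - σ γ)‖ * ‖v‖ :=
        ContinuousLinearMap.le_opNorm _ _
    _ ≤ ‖σ χ - σ γ‖ * 1 := by
        rw [LinearIsometryEquiv.norm_map ContinuousLinearMap.adjoint]
        exact mul_le_mul_of_nonneg_left (by rw [hgrad]; exact hgrad1) (norm_nonneg _)
    _ = ‖σ χ - σ γ‖ := mul_one _
    _ ≤ C * orientedDist K (χ t) := by rw [hb]; exact hnorm

end
end

section
/- Estimate (3.16), abstract one-sided form: Let K ⊆ ℝⁿ be a nonempty compact set with nonempty frontier ∂K, and let t ≥ 0. Let F be a real-valued functional on paths on [0,t] that is sup-Lipschitz with constant C ≥ 0, and assume F(γ) ≥ 0 for every γ ∈ Λ_{∂K,t}. Then for every χ ∈ Λ_{K̊,t}: −F(χ) ≤ C · dist(χ(t), ∂K). -/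
/-- Estimate (3.16), abstract one-sided form: if a real-valued sup-Lipschitz path functional
`F` is nonnegative on all paths lying in the interior of `K` on `[0,t)` and hitting the
frontier of `K` at time `t`, then on paths staying in the interior of `K` on `[0,t]` one has
`-F χ ≤ C · dist(χ(t), ∂K)`. -/
theorem estimate_3_16_abstract
    (n : ℕ)
    (K : Set (EuclideanSpace ℝ (Fin n)))
    (hKne : K.Nonempty) (hKcpt : IsCompact K) (hfr : (frontier K).Nonempty)
    (t : ℝ) (ht : 0 ≤ t)
    (F : (ℝ → EuclideanSpace ℝ (Fin n)) → ℝ)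
    (C : ℝ) (hC : 0 ≤ C)
    (hLip : ∀ (χ χ' : ℝ → EuclideanSpace ℝ (Fin n)) (M : ℝ), 0 ≤ M →
      (∀ s ∈ Set.Icc 0 t, ‖χ s - χ' s‖ ≤ M) → ‖F χ - F χ'‖ ≤ C * M)
    (hnonneg : ∀ γ : ℝ → EuclideanSpace ℝ (Fin n),
      (∀ s ∈ Set.Ico 0 t, γ s ∈ interior K) → γ t ∈ frontier K → 0 ≤ F γ)
    (χ : ℝ → EuclideanSpace ℝ (Fin n))
    (hχ : ∀ s ∈ Set.Icc 0 t, χ s ∈ interior K) :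
    -F χ ≤ C * Metric.infDist (χ t) (frontier K) := by
  have hfrcpt : IsCompact (frontier K) :=
    hKcpt.of_isClosed_subset isClosed_frontier
      (by rw [frontier_eq_closure_inter_closure, hKcpt.isClosed.closure_eq]
          exact Set.inter_subset_left)
  obtain ⟨y, hy, hyd⟩ := hfrcpt.exists_infDist_eq_dist hfr (χ t)
  set γ : ℝ → EuclideanSpace ℝ (Fin n) := fun s => if s = t then y else χ s with hγ
  have hγt : γ t = y := by simp [hγ]
  have hγint : ∀ s ∈ Set.Ico 0 t, γ s ∈ interior K := by
    intro s hs
    have hne : s ≠ t := ne_of_lt hs.2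
    simpa [hγ, hne] using hχ s ⟨hs.1, le_of_lt hs.2⟩
  have hFγ : 0 ≤ F γ := hnonneg γ hγint (hγt ▸ hy)
  have hM : ∀ s ∈ Set.Icc 0 t, ‖χ s - γ s‖ ≤ dist (χ t) y := by
    intro s hs
    by_cases h : s = t
    · simp [hγ, h, dist_eq_norm]
    · simp [hγ, h, dist_nonneg]
  have hlip := hLip χ γ (dist (χ t) y) dist_nonneg hM
  have : F γ - F χ ≤ C * dist (χ t) y := by
    calc F γ - F χ ≤ ‖F γ - F χ‖ := le_abs_self _
    _ = ‖F χ - F γ‖ := by rw [norm_sub_rev]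
    _ ≤ C * dist (χ t) y := hlip
  rw [hyd]
  linarith
end

section
/- Boundary vanishing estimate (mechanism underlying (3.14) and (3.16)): Let K ⊆ ℝⁿ be a nonempty compact set with nonempty frontier ∂K, let t ≥ 0, and let E be a normed vector space. Let Φ be a functional from paths on [0,t] into E that is sup-Lipschitz with constant C ≥ 0, and assume Φ(γ) = 0 for every γ ∈ Λ_{∂K,t}. Then for every χ ∈ Λ_{K̊,t}: ‖Φ(χ)‖ ≤ C · dist(χ(t), ∂K). -/
/-- Boundary vanishing estimate: a sup-Lipschitz path functional that vanishes on all
paths lying in the interior of `K` on `[0,t)` and hitting the frontier of `K` at time `t`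
is bounded, on paths staying in the interior of `K` on `[0,t]`, by the Lipschitz constant
times the distance from the endpoint to the frontier. -/
theorem boundary_vanishing_estimate
    (n : ℕ) (E : Type*) [NormedAddCommGroup E] [NormedSpace ℝ E]
    (K : Set (EuclideanSpace ℝ (Fin n)))
    (hKne : K.Nonempty) (hKcpt : IsCompact K) (hfr : (frontier K).Nonempty)
    (t : ℝ) (ht : 0 ≤ t)
    (Φ : (ℝ → EuclideanSpace ℝ (Fin n)) → E)
    (C : ℝ) (hC : 0 ≤ C)
    (hLip : ∀ (χ χ' : ℝ → EuclideanSpace ℝ (Fin n)) (M : ℝ), 0 ≤ M →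
      (∀ s ∈ Set.Icc 0 t, ‖χ s - χ' s‖ ≤ M) → ‖Φ χ - Φ χ'‖ ≤ C * M)
    (hzero : ∀ γ : ℝ → EuclideanSpace ℝ (Fin n),
      (∀ s ∈ Set.Ico 0 t, γ s ∈ interior K) → γ t ∈ frontier K → Φ γ = 0)
    (χ : ℝ → EuclideanSpace ℝ (Fin n))
    (hχ : ∀ s ∈ Set.Icc 0 t, χ s ∈ interior K) :
    ‖Φ χ‖ ≤ C * Metric.infDist (χ t) (frontier K) := by
  have hfrc : IsCompact (frontier K) :=
    hKcpt.of_isClosed_subset isClosed_frontier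
      (by simpa [hKcpt.isClosed.closure_eq] using frontier_subset_closure (s := K))
  obtain ⟨y, hy, hdy⟩ := hfrc.exists_infDist_eq_dist hfr (χ t)
  set γ : ℝ → EuclideanSpace ℝ (Fin n) := fun s => if s = t then y else χ s with hγ
  have hγ0 : Φ γ = 0 := by
    apply hzero
    · intro s hs
      have hst : s ≠ t := ne_of_lt hs.2
      simpa [hγ, hst] using hχ s ⟨hs.1, hs.2.le⟩
    · simp [hγ, hy]
  have hM : (0:ℝ) ≤ Metric.infDist (χ t) (frontier K) := Metric.infDist_nonneg
  have := hLip χ γ (Metric.infDist (χ t) (frontier K)) hM ?_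
  · simpa [hγ0] using this
  · intro s hs
    by_cases hst : s = t
    · subst hst
      simp [hγ, hdy, dist_eq_norm]
    · simp [hγ, hst, hM]
end

section
/- Existence of the extension g used in Lemma 3.2: Let K ⊆ ℝⁿ be a nonempty compact set with nonempty interior and oriented distance function b_K, and let ε₀ > 0 be such that b_K is twice continuously differentiable with Lipschitz-continuous second derivative on N_{ε₀}. Then there exist ε₁ with 0 < ε₁ ≤ ε₀ and a function g : ℝⁿ → ℝ, twice continuously differentiable on ℝⁿ with Lipschitz-continuous second derivative, such that 0 ≤ g ≤ 1 on K, g > 0 on {x ∈ K : b_K(x) ≥ ε₁}, and g = b_K on K_{ε₁}. -/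
noncomputable section
/- ### Auxiliary lemmas -/

theorem crossing_aux {E : Type*} [NormedAddCommGroup E] [NormedSpace ℝ E]
    (C : Set E) (hC : IsClosed C) {x y : E} (hx : x ∈ C) (hy : y ∉ C) :
    ∃ z, z ∈ C ∧ z ∈ closure Cᶜ ∧ dist x z + dist z y = dist x y := by
  have hxy : x ≠ y := fun h => hy (h ▸ hx)
  set γ : ℝ → E := fun t => x + t • (y - x) with hγ
  have hγc : Continuous γ := by fun_prop
  set T : Set ℝ := Set.Icc 0 1 ∩ γ ⁻¹' C with hT
  have hTc : IsClosed T := isClosed_Icc.inter (hC.preimage hγc)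
  have h0 : (0:ℝ) ∈ T := by
    constructor
    · exact Set.mem_Icc.2 ⟨le_refl 0, zero_le_one⟩
    · show γ 0 ∈ C; simpa [hγ] using hx
  have hTb : BddAbove T := BddAbove.inter_of_left bddAbove_Icc
  set t := sSup T with ht
  have htT : t ∈ T := hTc.csSup_mem ⟨0, h0⟩ hTb
  have ht1 : t ≤ 1 := htT.1.2
  have ht0 : 0 ≤ t := htT.1.1
  have hγ1 : γ 1 = y := by simp [hγ]
  have htne : t ≠ 1 := by
    intro h
    exact hy (by rw [← hγ1, ← h]; exact htT.2)
  have htlt : t < 1 := lt_of_le_of_ne ht1 htne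
  have hv : (0:ℝ) < ‖y - x‖ := by
    rw [norm_pos_iff, sub_ne_zero]; exact Ne.symm hxy
  have hsub : ∀ a b : ℝ, γ a - γ b = (a - b) • (y - x) := by
    intro a b; simp only [hγ]; module
  refine ⟨γ t, htT.2, ?_, ?_⟩
  · rw [Metric.mem_closure_iff]
    intro ε hε
    set s := min 1 (t + ε / (‖y - x‖ + 1)) with hs
    have hpos : 0 < ε / (‖y - x‖ + 1) := div_pos hε (by linarith)
    have hst : t < s := lt_min htlt (by linarith)
    have hs1 : s ≤ 1 := min_le_left _ _
    have hsnotT : s ∉ T := fun hmem => (not_le.mpr hst) (le_csSup hTb hmem)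
    have hsC : γ s ∉ C := fun hmem => hsnotT ⟨⟨le_trans ht0 hst.le, hs1⟩, hmem⟩
    refine ⟨γ s, hsC, ?_⟩
    have hd : dist (γ t) (γ s) = (s - t) * ‖y - x‖ := by
      rw [dist_eq_norm, hsub, norm_smul, Real.norm_eq_abs,
        abs_of_nonpos (by linarith : t - s ≤ 0)]
      ring
    rw [hd]
    have hle : s - t ≤ ε / (‖y - x‖ + 1) := by
      have := min_le_right 1 (t + ε / (‖y - x‖ + 1))
      linarith [this.trans_eq rfl]
    calc (s - t) * ‖y - x‖ ≤ ε / (‖y - x‖ + 1) * ‖y - x‖ := by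
          apply mul_le_mul_of_nonneg_right hle hv.le
      _ < ε := by
          rw [div_mul_eq_mul_div, div_lt_iff₀ (by linarith)]
          nlinarith
  · have e1 : x - γ t = (-t) • (y - x) := by simp only [hγ]; module
    have e2 : γ t - y = (t - 1) • (y - x) := by simp only [hγ]; module
    have h1 : dist x (γ t) = t * ‖y - x‖ := by
      rw [dist_eq_norm, e1, norm_smul, Real.norm_eq_abs, abs_neg, abs_of_nonneg ht0]
    have h2 : dist (γ t) y = (1 - t) * ‖y - x‖ := by
      rw [dist_eq_norm, e2, norm_smul, Real.norm_eq_abs,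
        abs_of_nonpos (by linarith : t - 1 ≤ 0)]
      ring
    rw [h1, h2, dist_eq_norm, ← norm_neg (x - y), neg_sub]
    ring

open Metric in
theorem orientedDist_lipschitz {n : ℕ} (K : Set (EuclideanSpace ℝ (Fin n)))
    (hK : IsClosed K) : LipschitzWith 1 (orientedDist K) := by
  apply LipschitzWith.of_dist_le_mul
  intro x y
  rw [NNReal.coe_one, one_mul, Real.dist_eq]
  have key : ∀ a b : EuclideanSpace ℝ (Fin n), a ∈ K → b ∉ K →
      |orientedDist K a - orientedDist K b| ≤ dist a b := by
    intro a b ha hb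
    obtain ⟨z, hzC, hzc, hzd⟩ := crossing_aux K hK ha hb
    have hzf : z ∈ frontier K := by
      rw [frontier_eq_closure_inter_closure, hK.closure_eq]
      exact ⟨hzC, hzc⟩
    have h1 : infDist a (frontier K) ≤ dist a z := infDist_le_dist_of_mem hzf
    have h2 : infDist b (frontier K) ≤ dist z b := by
      rw [dist_comm]; exact infDist_le_dist_of_mem hzf
    rw [orientedDist, orientedDist, if_pos ha, if_neg hb, sub_neg_eq_add,
      abs_of_nonneg (add_nonneg infDist_nonneg infDist_nonneg)]
    linarith
  by_cases hx : x ∈ K <;> by_cases hy : y ∈ K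
  · rw [orientedDist, orientedDist, if_pos hx, if_pos hy]
    exact abs_sub_le_iff.2
      ⟨by linarith [infDist_le_infDist_add_dist (x := x) (y := y) (s := frontier K)],
       by linarith [infDist_le_infDist_add_dist (x := y) (y := x) (s := frontier K),
         dist_comm x y]⟩
  · exact key x y hx hy
  · rw [abs_sub_comm, dist_comm]; exact key y x hy hx
  · rw [orientedDist, orientedDist, if_neg hx, if_neg hy, neg_sub_neg]
    exact abs_sub_le_iff.2
      ⟨by linarith [infDist_le_infDist_add_dist (x := y) (y := x) (s := frontier K),
         dist_comm x y],
       by linarith [infDist_le_infDist_add_dist (x := x) (y := y) (s := frontier K)]⟩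

theorem abs_orientedDist {n : ℕ} (K : Set (EuclideanSpace ℝ (Fin n)))
    (x : EuclideanSpace ℝ (Fin n)) :
    |orientedDist K x| = Metric.infDist x (frontier K) := by
  rw [orientedDist]
  split_ifs
  · exact abs_of_nonneg Metric.infDist_nonneg
  · rw [abs_neg]; exact abs_of_nonneg Metric.infDist_nonneg

open Metric in
theorem isCompact_sub_level {n : ℕ} (K : Set (EuclideanSpace ℝ (Fin n)))
    (hKne : K.Nonempty) (hKcpt : IsCompact K) (r : ℝ) (hr : 0 < r) :
    IsCompact {x | |orientedDist K x| ≤ r} := by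
  have hcont : Continuous (orientedDist K) := (orientedDist_lipschitz K hKcpt.isClosed).continuous
  have hclosed : IsClosed {x | |orientedDist K x| ≤ r} :=
    isClosed_le (by fun_prop) continuous_const
  apply Metric.isCompact_of_isClosed_isBounded hclosed
  obtain ⟨R, hR⟩ := hKcpt.isBounded.subset_closedBall 0
  apply Bornology.IsBounded.subset
    (Metric.isBounded_closedBall (x := (0:EuclideanSpace ℝ (Fin n))) (r := R + r + 1))
  intro x hx
  simp only [Set.mem_setOf_eq] at hx
  by_cases hxK : x ∈ K
  · have := hR hxK
    rw [mem_closedBall] at this ⊢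
    have h1 : (0:ℝ) ≤ r := hr.le
    linarith
  · have hfr : (frontier K).Nonempty := by
      by_contra hemp
      rw [Set.not_nonempty_iff_eq_empty] at hemp
      have hop : IsOpen K := by
        have h2 : interior K = K := by
          have h1 := hKcpt.isClosed.frontier_eq
          rw [hemp] at h1
          have := Set.diff_eq_empty.1 h1.symm
          exact le_antisymm interior_subset this
        rw [← h2]; exact isOpen_interior
      have := isClopen_iff.1 ⟨hKcpt.isClosed, hop⟩
      rcases this with h | h
      · exact hKne.ne_empty h
      · exact hxK (h ▸ Set.mem_univ x)
    rw [abs_orientedDist] at hx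
    have : infDist x (frontier K) < r + 1 := by linarith
    obtain ⟨z, hz, hdz⟩ := (infDist_lt_iff hfr).1 this
    have hzK : z ∈ K := by
      have := frontier_subset_closure (s := K) hz
      rwa [hKcpt.isClosed.closure_eq] at this
    have hzR := hR hzK
    rw [mem_closedBall] at hzR ⊢
    calc dist x 0 ≤ dist x z + dist z 0 := dist_triangle _ _ _
      _ ≤ (r + 1) + R := by linarith
      _ = R + r + 1 := by ring

/- ### The smooth cut-off function `φ` -/

section Phi
open intervalIntegral Metric

variable (f : ContDiffBump (0:ℝ))

def phiAux : ℝ → ℝ := fun t => ∫ s in (0:ℝ)..t, f s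

theorem phiAux_hasDerivAt (t : ℝ) : HasDerivAt (phiAux f) (f t) t :=
  (f.continuous.integral_hasStrictDerivAt 0 t).hasDerivAt

theorem phiAux_deriv : deriv (phiAux f) = f := funext fun t => (phiAux_hasDerivAt f t).deriv

theorem phiAux_contDiff : ContDiff ℝ 2 (phiAux f) := by
  rw [show (2 : WithTop ℕ∞) = 1 + 1 from rfl, contDiff_succ_iff_deriv]
  refine ⟨fun t => (phiAux_hasDerivAt f t).differentiableAt, by simp, ?_⟩
  rw [phiAux_deriv]
  exact f.contDiff (n := 1)

theorem phiAux_mono {s t : ℝ} (hst : s ≤ t) : phiAux f s ≤ phiAux f t := by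
  have h1 : IntervalIntegrable (⇑f) MeasureTheory.volume 0 s :=
    f.continuous.intervalIntegrable _ _
  have h2 : IntervalIntegrable (⇑f) MeasureTheory.volume s t :=
    f.continuous.intervalIntegrable _ _
  have := intervalIntegral.integral_add_adjacent_intervals h1 h2
  have hnn : 0 ≤ ∫ u in s..t, f u :=
    intervalIntegral.integral_nonneg hst fun u _ => f.nonneg
  rw [phiAux, phiAux]
  linarith [this]

theorem phiAux_zero : phiAux f 0 = 0 := intervalIntegral.integral_same

theorem phiAux_eq_self {t : ℝ} (h : |t| ≤ f.rIn) : phiAux f t = t := by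
  rw [phiAux]
  have heq : Set.EqOn (⇑f) (fun _ => (1:ℝ)) (Set.uIcc 0 t) := by
    intro u hu
    apply f.one_of_mem_closedBall
    rw [mem_closedBall, dist_zero_right, Real.norm_eq_abs]
    rcases Set.mem_uIcc.1 hu with ⟨h1, h2⟩ | ⟨h1, h2⟩
    · rw [abs_le]; have hr := f.rIn_pos
      constructor <;> linarith [le_abs_self t, neg_abs_le t]
    · rw [abs_le]; have hr := f.rIn_pos
      constructor <;> linarith [le_abs_self t, neg_abs_le t]
  rw [intervalIntegral.integral_congr heq, intervalIntegral.integral_const]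
  simp

theorem phiAux_const_ge {t : ℝ} (h : f.rOut ≤ t) : phiAux f t = phiAux f f.rOut := by
  have h1 : IntervalIntegrable (⇑f) MeasureTheory.volume 0 f.rOut :=
    f.continuous.intervalIntegrable _ _
  have h2 : IntervalIntegrable (⇑f) MeasureTheory.volume f.rOut t :=
    f.continuous.intervalIntegrable _ _
  have hz : ∫ u in f.rOut..t, f u = 0 := by
    have heq : Set.EqOn (⇑f) (fun _ => (0:ℝ)) (Set.uIcc f.rOut t) := by
      intro u hu
      apply f.zero_of_le_dist
      rw [dist_zero_right, Real.norm_eq_abs]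
      rw [Set.uIcc_of_le h] at hu
      have h0 : 0 < f.rOut := f.rOut_pos
      rw [abs_of_nonneg (by linarith [hu.1])]; exact hu.1
    rw [intervalIntegral.integral_congr heq]; simp
  have := intervalIntegral.integral_add_adjacent_intervals h1 h2
  rw [phiAux, phiAux, ← this, hz, add_zero]

theorem phiAux_const_le {t : ℝ} (h : t ≤ -f.rOut) : phiAux f t = phiAux f (-f.rOut) := by
  have h1 : IntervalIntegrable (⇑f) MeasureTheory.volume 0 (-f.rOut) :=
    f.continuous.intervalIntegrable _ _
  have h2 : IntervalIntegrable (⇑f) MeasureTheory.volume (-f.rOut) t :=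
    f.continuous.intervalIntegrable _ _
  have hz : ∫ u in (-f.rOut)..t, f u = 0 := by
    have heq : Set.EqOn (⇑f) (fun _ => (0:ℝ)) (Set.uIcc (-f.rOut) t) := by
      intro u hu
      apply f.zero_of_le_dist
      rw [dist_zero_right, Real.norm_eq_abs]
      rw [Set.uIcc_of_ge h] at hu
      have h0 : 0 < f.rOut := f.rOut_pos
      rw [abs_of_nonpos (by linarith [hu.2])]
      linarith [hu.2]
    rw [intervalIntegral.integral_congr heq]; simp
  have := intervalIntegral.integral_add_adjacent_intervals h1 h2
  rw [phiAux, phiAux, ← this, hz, add_zero]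

theorem phiAux_le_rOut {t : ℝ} : phiAux f t ≤ f.rOut := by
  have hmain : phiAux f f.rOut ≤ f.rOut := by
    rw [phiAux]
    calc (∫ s in (0:ℝ)..f.rOut, f s) ≤ ∫ _ in (0:ℝ)..f.rOut, (1:ℝ) :=
          intervalIntegral.integral_mono_on f.rOut_pos.le
            (f.continuous.intervalIntegrable _ _)
            intervalIntegrable_const (fun x _ => f.le_one)
      _ = f.rOut := by simp
  rcases le_or_gt t f.rOut with h | h
  · exact le_trans (phiAux_mono f h) hmain
  · rw [phiAux_const_ge f h.le]; exact hmain

end Phi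

set_option maxHeartbeats 1000000 in
open Metric in
/-- Existence of the extension `g` used in Lemma 3.2: if `K ⊆ ℝⁿ` is a nonempty compact set
with nonempty interior whose oriented distance function `b_K` is `C²` with Lipschitz second
derivative on `N_{ε₀} = {|b_K| < ε₀}`, then there are `0 < ε₁ ≤ ε₀` and a globally `C²`
function `g` with Lipschitz second derivative such that `0 ≤ g ≤ 1` on `K`, `g > 0` on
`{x ∈ K : b_K(x) ≥ ε₁}`, and `g = b_K` on `K_{ε₁} = K ∩ {|b_K| < ε₁}`. -/
theorem exists_extension_g
    (n : ℕ) (K : Set (EuclideanSpace ℝ (Fin n)))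
    (hKne : K.Nonempty) (hKcpt : IsCompact K) (hKint : (interior K).Nonempty)
    (ε₀ : ℝ) (hε₀ : 0 < ε₀)
    (hbC2 : ContDiffOn ℝ 2 (orientedDist K) {x | |orientedDist K x| < ε₀})
    (hbLip : ∃ L : ℝ, 0 ≤ L ∧ ∀ x ∈ {x | |orientedDist K x| < ε₀},
      ∀ y ∈ {x | |orientedDist K x| < ε₀},
        ‖iteratedFDeriv ℝ 2 (orientedDist K) x - iteratedFDeriv ℝ 2 (orientedDist K) y‖ ≤
          L * ‖x - y‖) :
    ∃ ε₁ : ℝ, 0 < ε₁ ∧ ε₁ ≤ ε₀ ∧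
      ∃ g : EuclideanSpace ℝ (Fin n) → ℝ,
        ContDiff ℝ 2 g ∧
        (∃ L : NNReal, LipschitzWith L (fun x => iteratedFDeriv ℝ 2 g x)) ∧
        (∀ x ∈ K, 0 ≤ g x ∧ g x ≤ 1) ∧
        (∀ x ∈ K, ε₁ ≤ orientedDist K x → 0 < g x) ∧
        (∀ x ∈ K, |orientedDist K x| < ε₁ → g x = orientedDist K x) := by
  obtain ⟨L, hL0, hLip⟩ := hbLip
  set b : EuclideanSpace ℝ (Fin n) → ℝ := orientedDist K with hbdef
  have hblip : LipschitzWith 1 b := orientedDist_lipschitz K hKcpt.isClosed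
  have hbcont : Continuous b := hblip.continuous
  set c : ℝ := min ε₀ 1 with hcdef
  have hc0 : 0 < c := lt_min hε₀ one_pos
  have hcε : c ≤ ε₀ := min_le_left _ _
  have hc1 : c ≤ 1 := min_le_right _ _
  set f : ContDiffBump (0:ℝ) := ⟨c/4, c/2, by positivity, by linarith⟩ with hfdef
  have hrIn : f.rIn = c/4 := rfl
  have hrOut : f.rOut = c/2 := rfl
  set g : EuclideanSpace ℝ (Fin n) → ℝ := fun x => phiAux f (b x) with hgdef
  set U : Set (EuclideanSpace ℝ (Fin n)) := {x | |b x| < ε₀} with hUdef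
  have hUopen : IsOpen U := by
    have : U = (fun x => |b x|) ⁻¹' (Set.Iio ε₀) := rfl
    rw [this]
    exact IsOpen.preimage (by fun_prop) isOpen_Iio
  have hbx_mem : ∀ x : EuclideanSpace ℝ (Fin n), |b x| < ε₀ → x ∈ U := fun x h => h
  -- `g` is `C²`
  have hg : ContDiff ℝ 2 g := by
    rw [contDiff_iff_contDiffAt]
    intro x
    by_cases hx : |b x| < ε₀
    · exact (phiAux_contDiff f).contDiffAt.comp x (hbC2.contDiffAt (hUopen.mem_nhds hx))
    · push_neg at hx
      rcases le_or_gt 0 (b x) with hsgn | hsgn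
      · -- here b x ≥ ε₀ > c/2, so g is locally constant
        have hxV : x ∈ {y | c/2 < b y} := by
          simp only [Set.mem_setOf_eq]
          have : |b x| = b x := abs_of_nonneg hsgn
          linarith [this ▸ hx]
        have hVopen : IsOpen {y | c/2 < b y} := isOpen_lt continuous_const hbcont
        have hev : g =ᶠ[nhds x] fun _ => phiAux f f.rOut := by
          filter_upwards [hVopen.mem_nhds hxV] with y hy
          exact phiAux_const_ge f (by rw [hrOut]; exact le_of_lt hy)
        exact contDiffAt_const.congr_of_eventuallyEq hev
      · -- here b x ≤ -ε₀ < -c/2, so g is locally constant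
        have hxV : x ∈ {y | b y < -(c/2)} := by
          simp only [Set.mem_setOf_eq]
          have : |b x| = -(b x) := abs_of_neg hsgn
          have h2 : -(b x) ≥ ε₀ := by linarith [this ▸ hx]
          linarith
        have hVopen : IsOpen {y | b y < -(c/2)} := isOpen_lt hbcont continuous_const
        have hev : g =ᶠ[nhds x] fun _ => phiAux f (-f.rOut) := by
          filter_upwards [hVopen.mem_nhds hxV] with y hy
          exact phiAux_const_le f (by rw [hrOut]; exact le_of_lt hy)
        exact contDiffAt_const.congr_of_eventuallyEq hev
  -- distances contract under `b`
  have hbd : ∀ w z : EuclideanSpace ℝ (Fin n), |b w - b z| ≤ ‖w - z‖ := by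
    intro w z
    have := hblip.dist_le_mul w z
    rwa [Real.dist_eq, NNReal.coe_one, one_mul, dist_eq_norm] at this
  -- the sets S ⊆ S₂ ⊆ U
  have h34 : 3 * c / 4 < ε₀ := by linarith
  have hSsub : ∀ x : EuclideanSpace ℝ (Fin n), |b x| ≤ c/2 → |b x| ≤ 3*c/4 := by
    intro x hx; linarith
  have hS2sub : ∀ x : EuclideanSpace ℝ (Fin n), |b x| ≤ 3*c/4 → x ∈ U := by
    intro x hx; exact lt_of_le_of_lt hx h34
  have hS2cpt : IsCompact {x : EuclideanSpace ℝ (Fin n) | |b x| ≤ 3*c/4} :=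
    isCompact_sub_level K hKne hKcpt _ (by positivity)
  have hSclosed : IsClosed {x : EuclideanSpace ℝ (Fin n) | |b x| ≤ c/2} :=
    isClosed_le (by fun_prop) continuous_const
  -- derivatives of b
  have hB1 : ContDiffOn ℝ 1 (fderiv ℝ b) U := hbC2.fderiv_of_isOpen hUopen (by norm_num)
  have hBcont : ContinuousOn (fderiv ℝ b) U := hB1.continuousOn
  have hC2cont : ContinuousOn (fderiv ℝ (fderiv ℝ b)) U :=
    hB1.continuousOn_fderiv_of_isOpen hUopen le_rfl
  obtain ⟨M₁', hM₁'⟩ := hS2cpt.exists_bound_of_continuousOn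
    (hBcont.mono (fun x hx => hS2sub x hx))
  obtain ⟨M₂', hM₂'⟩ := hS2cpt.exists_bound_of_continuousOn
    (E := EuclideanSpace ℝ (Fin n) →L[ℝ] EuclideanSpace ℝ (Fin n) →L[ℝ] ℝ)
    (by exact hC2cont.mono (fun x hx => hS2sub x hx))
  set M₁ : ℝ := max M₁' 0 with hM₁def
  set M₂ : ℝ := max M₂' 0 with hM₂def
  have hM₁0 : 0 ≤ M₁ := le_max_right _ _
  have hM₂0 : 0 ≤ M₂ := le_max_right _ _
  have hM₁ : ∀ x : EuclideanSpace ℝ (Fin n), |b x| ≤ 3*c/4 → ‖fderiv ℝ b x‖ ≤ M₁ :=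
    fun x hx => le_trans (hM₁' x hx) (le_max_left _ _)
  have hM₂ : ∀ x : EuclideanSpace ℝ (Fin n), |b x| ≤ 3*c/4 → ‖fderiv ℝ (fderiv ℝ b) x‖ ≤ M₂ :=
    fun x hx => le_trans (hM₂' x hx) (le_max_left _ _)
  have hbdiff : ∀ x ∈ U, DifferentiableAt ℝ b x := fun x hx =>
    (hbC2.contDiffAt (hUopen.mem_nhds hx)).differentiableAt two_ne_zero
  have hBdiff : ∀ x ∈ U, DifferentiableAt ℝ (fderiv ℝ b) x := fun x hx =>
    (hB1.contDiffAt (hUopen.mem_nhds hx)).differentiableAt one_ne_zero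
  -- the bump function and its derivative are Lipschitz and bounded
  have hfc1 : ContDiff ℝ 1 (⇑f) := f.contDiff (n := 1)
  obtain ⟨Lf, hLf⟩ := hfc1.lipschitzWith_of_hasCompactSupport f.hasCompactSupport one_ne_zero
  have hf'c : ContDiff ℝ 1 (deriv (⇑f)) := by
    have h2 : ContDiff ℝ 2 (⇑f) := by exact_mod_cast f.contDiff (n := 2)
    rw [show (2:WithTop ℕ∞) = 1 + 1 from rfl, contDiff_succ_iff_deriv] at h2
    exact h2.2.2
  have hf'supp : HasCompactSupport (deriv (⇑f)) := f.hasCompactSupport.deriv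
  obtain ⟨Lf', hLf'⟩ := hf'c.lipschitzWith_of_hasCompactSupport hf'supp one_ne_zero
  obtain ⟨Mf', hMf'⟩ := hf'supp.exists_bound_of_continuous hf'c.continuous
  have hMf'0 : 0 ≤ Mf' := le_trans (norm_nonneg _) (hMf' 0)
  have hfderiv : ∀ t : ℝ, HasDerivAt (⇑f) (deriv (⇑f) t) t := fun t =>
    ((hfc1.differentiable one_ne_zero) t).hasDerivAt
  -- formula for the first derivative of g on U
  have hgU : ∀ x ∈ U, HasFDerivAt g ((f (b x)) • fderiv ℝ b x) x := fun x hx =>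
    (phiAux_hasDerivAt f (b x)).comp_hasFDerivAt x (hbdiff x hx).hasFDerivAt
  have hDgU : ∀ x ∈ U, fderiv ℝ g x = (f (b x)) • fderiv ℝ b x := fun x hx =>
    (hgU x hx).fderiv
  -- formula for the second derivative of g on U
  have hHU : ∀ x ∈ U, fderiv ℝ (fderiv ℝ g) x =
      f (b x) • fderiv ℝ (fderiv ℝ b) x +
        ((deriv (⇑f) (b x)) • fderiv ℝ b x).smulRight (fderiv ℝ b x) := by
    intro x hx
    have hev : fderiv ℝ g =ᶠ[nhds x] fun y => (f (b y)) • fderiv ℝ b y := by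
      filter_upwards [hUopen.mem_nhds hx] with y hy
      exact hDgU y hy
    have hc : HasFDerivAt (fun y => f (b y)) ((deriv (⇑f) (b x)) • fderiv ℝ b x) x :=
      (hfderiv (b x)).comp_hasFDerivAt x (hbdiff x hx).hasFDerivAt
    have hb2 : HasFDerivAt (fderiv ℝ b) (fderiv ℝ (fderiv ℝ b) x) x :=
      (hBdiff x hx).hasFDerivAt
    have h1 := hc.smul hb2
    rw [hev.fderiv_eq]
    exact h1.fderiv
  -- g is locally constant outside S, so its derivatives vanish there
  have hDgV : ∀ x : EuclideanSpace ℝ (Fin n), c/2 < |b x| → fderiv ℝ g x = 0 := by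
    intro x hx
    rcases le_or_gt 0 (b x) with hsgn | hsgn
    · have hxV : x ∈ {y : EuclideanSpace ℝ (Fin n) | c/2 < b y} := by
        simp only [Set.mem_setOf_eq]
        rwa [abs_of_nonneg hsgn] at hx
      have hVopen : IsOpen {y : EuclideanSpace ℝ (Fin n) | c/2 < b y} :=
        isOpen_lt continuous_const hbcont
      have hev : g =ᶠ[nhds x] fun _ => phiAux f f.rOut := by
        filter_upwards [hVopen.mem_nhds hxV] with y hy
        exact phiAux_const_ge f (by rw [hrOut]; exact le_of_lt hy)
      rw [hev.fderiv_eq, fderiv_fun_const]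
      rfl
    · have hxV : x ∈ {y : EuclideanSpace ℝ (Fin n) | b y < -(c/2)} := by
        simp only [Set.mem_setOf_eq]
        rw [abs_of_neg hsgn] at hx
        linarith
      have hVopen : IsOpen {y : EuclideanSpace ℝ (Fin n) | b y < -(c/2)} :=
        isOpen_lt hbcont continuous_const
      have hev : g =ᶠ[nhds x] fun _ => phiAux f (-f.rOut) := by
        filter_upwards [hVopen.mem_nhds hxV] with y hy
        exact phiAux_const_le f (by rw [hrOut]; exact le_of_lt hy)
      rw [hev.fderiv_eq, fderiv_fun_const]
      rfl
  have hVopen' : IsOpen {y : EuclideanSpace ℝ (Fin n) | c/2 < |b y|} :=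
    isOpen_lt continuous_const (by fun_prop)
  have hHV : ∀ x : EuclideanSpace ℝ (Fin n), c/2 < |b x| →
      fderiv ℝ (fderiv ℝ g) x = 0 := by
    intro x hx
    have hev : fderiv ℝ g =ᶠ[nhds x]
        fun _ => (0 : EuclideanSpace ℝ (Fin n) →L[ℝ] ℝ) := by
      filter_upwards [hVopen'.mem_nhds hx] with y hy
      exact hDgV y hy
    rw [hev.fderiv_eq, fderiv_fun_const]
    rfl
  have hDgC1 : ContDiff ℝ 1 (fderiv ℝ g) :=
    hg.fderiv_right (le_refl (2 : WithTop ℕ∞))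
  have hHcont : Continuous (fderiv ℝ (fderiv ℝ g)) := hDgC1.continuous_fderiv one_ne_zero
  have hHclos : ∀ x ∈ closure {y : EuclideanSpace ℝ (Fin n) | c/2 < |b y|},
      fderiv ℝ (fderiv ℝ g) x = 0 := by
    intro x hx
    have heq : Set.EqOn (fderiv ℝ (fderiv ℝ g))
        (fun _ => (0 : EuclideanSpace ℝ (Fin n) →L[ℝ] (EuclideanSpace ℝ (Fin n) →L[ℝ] ℝ)))
        (closure {y : EuclideanSpace ℝ (Fin n) | c/2 < |b y|}) :=
      Set.EqOn.closure (fun y hy => hHV y hy) hHcont continuous_const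
    exact heq hx
  -- Lipschitz bound for the second derivative of b, in bilinear form
  have hC2lip : ∀ x ∈ U, ∀ y ∈ U,
      ‖fderiv ℝ (fderiv ℝ b) x - fderiv ℝ (fderiv ℝ b) y‖ ≤ L * ‖x - y‖ := by
    intro x hx y hy
    apply ContinuousLinearMap.opNorm_le_bound _ (by positivity)
    intro v
    apply ContinuousLinearMap.opNorm_le_bound _ (by positivity)
    intro w
    have key : (fderiv ℝ (fderiv ℝ b) x - fderiv ℝ (fderiv ℝ b) y) v w =
        (iteratedFDeriv ℝ 2 b x - iteratedFDeriv ℝ 2 b y) ![v, w] := by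
      simp [ContinuousLinearMap.sub_apply, ContinuousMultilinearMap.sub_apply,
        iteratedFDeriv_two_apply]
    rw [key]
    calc ‖(iteratedFDeriv ℝ 2 b x - iteratedFDeriv ℝ 2 b y) ![v, w]‖
        ≤ ‖iteratedFDeriv ℝ 2 b x - iteratedFDeriv ℝ 2 b y‖ * ∏ i, ‖(![v, w]) i‖ :=
          ContinuousMultilinearMap.le_opNorm _ _
      _ = ‖iteratedFDeriv ℝ 2 b x - iteratedFDeriv ℝ 2 b y‖ * (‖v‖ * ‖w‖) := by
          rw [Fin.prod_univ_two]; simp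
      _ ≤ (L * ‖x - y‖) * (‖v‖ * ‖w‖) :=
          mul_le_mul_of_nonneg_right (hLip x hx y hy) (by positivity)
      _ = L * ‖x - y‖ * ‖v‖ * ‖w‖ := by ring
  -- the first derivative of b is Lipschitz on S
  set KB : ℝ := M₂ + 8 * M₁ / c with hKBdef
  have hKB0 : 0 ≤ KB := by positivity
  have hBlipS : ∀ x : EuclideanSpace ℝ (Fin n), |b x| ≤ c/2 →
      ∀ y : EuclideanSpace ℝ (Fin n), |b y| ≤ c/2 →
      ‖fderiv ℝ b x - fderiv ℝ b y‖ ≤ KB * ‖x - y‖ := by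
    intro x hx y hy
    rcases le_or_gt (dist x y) (c/4) with hd | hd
    · have hball : ∀ w ∈ Metric.closedBall x (c/4), |b w| ≤ 3*c/4 := by
        intro w hw
        rw [Metric.mem_closedBall] at hw
        have h1 := hbd w x
        rw [← dist_eq_norm] at h1
        have h2 := abs_sub_abs_le_abs_sub (b w) (b x)
        linarith
      have hmvt := (convex_closedBall x (c/4)).norm_image_sub_le_of_norm_fderiv_le
        (f := fderiv ℝ b) (C := M₂)
        (fun w hw => hBdiff w (hS2sub w (hball w hw)))
        (fun w hw => hM₂ w (hball w hw))
        (Metric.mem_closedBall_self (by positivity))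
        (by rw [Metric.mem_closedBall, dist_comm]; exact hd)
      rw [norm_sub_rev] at hmvt
      calc ‖fderiv ℝ b x - fderiv ℝ b y‖ ≤ M₂ * ‖y - x‖ := hmvt
        _ = M₂ * ‖x - y‖ := by rw [norm_sub_rev]
        _ ≤ KB * ‖x - y‖ := by
            apply mul_le_mul_of_nonneg_right _ (norm_nonneg _)
            rw [hKBdef]
            have : 0 ≤ 8 * M₁ / c := by positivity
            linarith
    · have h1 : ‖fderiv ℝ b x - fderiv ℝ b y‖ ≤ 2 * M₁ := by
        calc ‖fderiv ℝ b x - fderiv ℝ b y‖ ≤ ‖fderiv ℝ b x‖ + ‖fderiv ℝ b y‖ :=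
              norm_sub_le _ _
          _ ≤ M₁ + M₁ := add_le_add (hM₁ x (hSsub x hx)) (hM₁ y (hSsub y hy))
          _ = 2 * M₁ := by ring
      have h2 : 2 * M₁ ≤ (8 * M₁ / c) * ‖x - y‖ := by
        rw [← dist_eq_norm]
        rw [div_mul_eq_mul_div, le_div_iff₀ hc0]
        nlinarith [hd.le, dist_nonneg (x := x) (y := y)]
      calc ‖fderiv ℝ b x - fderiv ℝ b y‖ ≤ (8 * M₁ / c) * ‖x - y‖ := le_trans h1 h2
        _ ≤ KB * ‖x - y‖ := by
            apply mul_le_mul_of_nonneg_right _ (norm_nonneg _)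
            rw [hKBdef]; linarith
  -- the second derivative of g is Lipschitz on S
  set LH : ℝ := L + (Lf : ℝ) * M₂ + (Mf' * KB + (Lf' : ℝ) * M₁) * M₁ + Mf' * M₁ * KB
    with hLHdef
  have hLH0 : 0 ≤ LH := by positivity
  have hHlipS : ∀ x : EuclideanSpace ℝ (Fin n), |b x| ≤ c/2 →
      ∀ y : EuclideanSpace ℝ (Fin n), |b y| ≤ c/2 →
      ‖fderiv ℝ (fderiv ℝ g) x - fderiv ℝ (fderiv ℝ g) y‖ ≤ LH * ‖x - y‖ := by
    intro x hx y hy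
    have hxU : x ∈ U := hS2sub x (hSsub x hx)
    have hyU : y ∈ U := hS2sub y (hSsub y hy)
    set d : ℝ := ‖x - y‖ with hddef
    have hd0 : 0 ≤ d := norm_nonneg _
    -- abbreviations
    set Bx := fderiv ℝ b x with hBx
    set By := fderiv ℝ b y with hBy
    set Cx := fderiv ℝ (fderiv ℝ b) x with hCx
    set Cy := fderiv ℝ (fderiv ℝ b) y with hCy
    set px : ℝ := f (b x) with hpx
    set py : ℝ := f (b y) with hpy
    set qx : ℝ := deriv (⇑f) (b x) with hqx
    set qy : ℝ := deriv (⇑f) (b y) with hqy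
    -- basic bounds
    have hpxb : |px| ≤ 1 := abs_le.2 ⟨by linarith [f.nonneg (x := b x)], f.le_one⟩
    have hqxb : |qx| ≤ Mf' := by
      have := hMf' (b x); rwa [Real.norm_eq_abs] at this
    have hqyb : |qy| ≤ Mf' := by
      have := hMf' (b y); rwa [Real.norm_eq_abs] at this
    have hBxb : ‖Bx‖ ≤ M₁ := hM₁ x (hSsub x hx)
    have hByb : ‖By‖ ≤ M₁ := hM₁ y (hSsub y hy)
    have hCyb : ‖Cy‖ ≤ M₂ := hM₂ y (hSsub y hy)
    -- Lipschitz bounds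
    have hCd : ‖Cx - Cy‖ ≤ L * d := hC2lip x hxU y hyU
    have hpd : |px - py| ≤ (Lf : ℝ) * d := by
      have h1 := hLf.dist_le_mul (b x) (b y)
      have h2 := hbd x y
      rw [Real.dist_eq] at h1
      calc |px - py| ≤ (Lf : ℝ) * |b x - b y| := h1
        _ ≤ (Lf : ℝ) * d := by
            apply mul_le_mul_of_nonneg_left h2 (NNReal.coe_nonneg _)
    have hqd : |qx - qy| ≤ (Lf' : ℝ) * d := by
      have h1 := hLf'.dist_le_mul (b x) (b y)
      have h2 := hbd x y
      rw [Real.dist_eq] at h1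
      calc |qx - qy| ≤ (Lf' : ℝ) * |b x - b y| := h1
        _ ≤ (Lf' : ℝ) * d := by
            apply mul_le_mul_of_nonneg_left h2 (NNReal.coe_nonneg _)
    have hBd : ‖Bx - By‖ ≤ KB * d := hBlipS x hx y hy
    -- the two formulas
    have hfx := hHU x hxU
    have hfy := hHU y hyU
    rw [hfx, hfy]
    -- decompose the difference
    have hsplit : px • Cx + (qx • Bx).smulRight Bx - (py • Cy + (qy • By).smulRight By) =
        (px • (Cx - Cy) + (px - py) • Cy) +
          (((qx • Bx - qy • By)).smulRight Bx + (qy • By).smulRight (Bx - By)) := by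
      have e1 : (qx • Bx - qy • By).smulRight Bx + (qy • By).smulRight (Bx - By) =
          (qx • Bx).smulRight Bx - (qy • By).smulRight By := by
        apply ContinuousLinearMap.ext
        intro w
        simp only [ContinuousLinearMap.add_apply, ContinuousLinearMap.sub_apply,
          ContinuousLinearMap.smulRight_apply, ContinuousLinearMap.smul_apply,
          sub_smul, smul_sub]
        abel
      rw [e1]
      have e2 : px • (Cx - Cy) + (px - py) • Cy = px • Cx - py • Cy := by
        apply ContinuousLinearMap.ext
        intro w
        simp only [ContinuousLinearMap.add_apply, ContinuousLinearMap.sub_apply,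
          ContinuousLinearMap.smul_apply, sub_smul, smul_sub]
        abel
      rw [e2]
      abel
    rw [hsplit]
    -- estimate each piece
    have n1 : ‖px • (Cx - Cy)‖ ≤ L * d := by
      calc ‖px • (Cx - Cy)‖ = ‖px‖ * ‖Cx - Cy‖ := @norm_smul ℝ (EuclideanSpace ℝ (Fin n) →L[ℝ] EuclideanSpace ℝ (Fin n) →L[ℝ] ℝ) _ _ _ (@NormedSpace.toNormSMulClass ℝ (EuclideanSpace ℝ (Fin n) →L[ℝ] EuclideanSpace ℝ (Fin n) →L[ℝ] ℝ) _ _ _) px (Cx - Cy)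
        _ = |px| * ‖Cx - Cy‖ := by rw [Real.norm_eq_abs]
        _ ≤ 1 * (L * d) := mul_le_mul hpxb hCd (norm_nonneg (Cx - Cy)) one_pos.le
        _ = L * d := one_mul _
    have n2 : ‖(px - py) • Cy‖ ≤ ((Lf : ℝ) * M₂) * d := by
      calc ‖(px - py) • Cy‖ = ‖px - py‖ * ‖Cy‖ := @norm_smul ℝ (EuclideanSpace ℝ (Fin n) →L[ℝ] EuclideanSpace ℝ (Fin n) →L[ℝ] ℝ) _ _ _ (@NormedSpace.toNormSMulClass ℝ (EuclideanSpace ℝ (Fin n) →L[ℝ] EuclideanSpace ℝ (Fin n) →L[ℝ] ℝ) _ _ _) (px - py) Cy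
        _ = |px - py| * ‖Cy‖ := by rw [Real.norm_eq_abs]
        _ ≤ ((Lf : ℝ) * d) * M₂ :=
            mul_le_mul hpd hCyb (norm_nonneg Cy) (by positivity)
        _ = ((Lf : ℝ) * M₂) * d := by ring
    have nA : ‖qx • Bx - qy • By‖ ≤ (Mf' * KB + (Lf' : ℝ) * M₁) * d := by
      have e3 : qx • Bx - qy • By = qx • (Bx - By) + (qx - qy) • By := by
        rw [smul_sub, sub_smul]; abel
      rw [e3]
      calc ‖qx • (Bx - By) + (qx - qy) • By‖
          ≤ ‖qx • (Bx - By)‖ + ‖(qx - qy) • By‖ := norm_add_le _ _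
        _ ≤ Mf' * (KB * d) + ((Lf' : ℝ) * d) * M₁ := by
            apply add_le_add
            · rw [norm_smul, Real.norm_eq_abs]
              exact mul_le_mul hqxb hBd (norm_nonneg _) hMf'0
            · rw [norm_smul, Real.norm_eq_abs]
              exact mul_le_mul hqd hByb (norm_nonneg _) (by positivity)
        _ = (Mf' * KB + (Lf' : ℝ) * M₁) * d := by ring
    have n3 : ‖(qx • Bx - qy • By).smulRight Bx‖ ≤ ((Mf' * KB + (Lf' : ℝ) * M₁) * M₁) * d := by
      rw [ContinuousLinearMap.norm_smulRight_apply]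
      calc ‖qx • Bx - qy • By‖ * ‖Bx‖ ≤ ((Mf' * KB + (Lf' : ℝ) * M₁) * d) * M₁ :=
            mul_le_mul nA hBxb (norm_nonneg _) (by positivity)
        _ = ((Mf' * KB + (Lf' : ℝ) * M₁) * M₁) * d := by ring
    have n4 : ‖(qy • By).smulRight (Bx - By)‖ ≤ (Mf' * M₁ * KB) * d := by
      rw [ContinuousLinearMap.norm_smulRight_apply]
      have h5 : ‖qy • By‖ ≤ Mf' * M₁ := by
        rw [norm_smul, Real.norm_eq_abs]
        exact mul_le_mul hqyb hByb (norm_nonneg _) hMf'0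
      calc ‖qy • By‖ * ‖Bx - By‖ ≤ (Mf' * M₁) * (KB * d) :=
            mul_le_mul h5 hBd (norm_nonneg _) (by positivity)
        _ = (Mf' * M₁ * KB) * d := by ring
    calc ‖px • (Cx - Cy) + (px - py) • Cy +
          ((qx • Bx - qy • By).smulRight Bx + (qy • By).smulRight (Bx - By))‖
        ≤ ‖px • (Cx - Cy) + (px - py) • Cy‖ +
            ‖(qx • Bx - qy • By).smulRight Bx + (qy • By).smulRight (Bx - By)‖ :=
          norm_add_le (px • (Cx - Cy) + (px - py) • Cy)
            ((qx • Bx - qy • By).smulRight Bx + (qy • By).smulRight (Bx - By))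
      _ ≤ (‖px • (Cx - Cy)‖ + ‖(px - py) • Cy‖) +
            (‖(qx • Bx - qy • By).smulRight Bx‖ + ‖(qy • By).smulRight (Bx - By)‖) :=
          add_le_add (norm_add_le (px • (Cx - Cy)) ((px - py) • Cy))
            (norm_add_le ((qx • Bx - qy • By).smulRight Bx) ((qy • By).smulRight (Bx - By)))
      _ ≤ (L * d + ((Lf : ℝ) * M₂) * d) +
            (((Mf' * KB + (Lf' : ℝ) * M₁) * M₁) * d + (Mf' * M₁ * KB) * d) :=
          add_le_add (add_le_add n1 n2) (add_le_add n3 n4)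
      _ = LH * d := by rw [hLHdef]; ring
  -- globalize via the crossing lemma
  have hScompl : {x : EuclideanSpace ℝ (Fin n) | |b x| ≤ c/2}ᶜ =
      {y : EuclideanSpace ℝ (Fin n) | c/2 < |b y|} := by
    ext w; simp [not_le]
  have hHglob : ∀ x y : EuclideanSpace ℝ (Fin n),
      ‖fderiv ℝ (fderiv ℝ g) x - fderiv ℝ (fderiv ℝ g) y‖ ≤ LH * ‖x - y‖ := by
    intro x y
    by_cases hx : |b x| ≤ c/2 <;> by_cases hy : |b y| ≤ c/2
    · exact hHlipS x hx y hy
    · -- x ∈ S, y ∉ S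
      obtain ⟨z, hzS, hzc, hzd⟩ := crossing_aux _ hSclosed hx hy
      have hzc' : z ∈ closure {y : EuclideanSpace ℝ (Fin n) | c/2 < |b y|} := by
        rwa [hScompl] at hzc
      have hHz : fderiv ℝ (fderiv ℝ g) z = 0 := hHclos z hzc'
      have hHy : fderiv ℝ (fderiv ℝ g) y = 0 := hHV y (by simpa [not_le] using hy)
      rw [hHy, sub_zero, ← sub_zero (fderiv ℝ (fderiv ℝ g) x), ← hHz]
      calc ‖fderiv ℝ (fderiv ℝ g) x - fderiv ℝ (fderiv ℝ g) z‖ ≤ LH * ‖x - z‖ :=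
            hHlipS x hx z hzS
        _ ≤ LH * ‖x - y‖ := by
            apply mul_le_mul_of_nonneg_left _ hLH0
            rw [← dist_eq_norm, ← dist_eq_norm]
            linarith [dist_nonneg (x := z) (y := y)]
    · -- y ∈ S, x ∉ S
      obtain ⟨z, hzS, hzc, hzd⟩ := crossing_aux _ hSclosed hy hx
      have hzc' : z ∈ closure {y : EuclideanSpace ℝ (Fin n) | c/2 < |b y|} := by
        rwa [hScompl] at hzc
      have hHz : fderiv ℝ (fderiv ℝ g) z = 0 := hHclos z hzc'
      have hHx : fderiv ℝ (fderiv ℝ g) x = 0 := hHV x (by simpa [not_le] using hx)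
      rw [hHx, zero_sub, norm_neg (fderiv ℝ (fderiv ℝ g) y), ← sub_zero (fderiv ℝ (fderiv ℝ g) y), ← hHz]
      calc ‖fderiv ℝ (fderiv ℝ g) y - fderiv ℝ (fderiv ℝ g) z‖ ≤ LH * ‖y - z‖ :=
            hHlipS y hy z hzS
        _ ≤ LH * ‖x - y‖ := by
            apply mul_le_mul_of_nonneg_left _ hLH0
            rw [← dist_eq_norm, ← dist_eq_norm, dist_comm x y]
            linarith [dist_nonneg (x := z) (y := x)]
    · have hHx : fderiv ℝ (fderiv ℝ g) x = 0 := hHV x (by simpa [not_le] using hx)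
      have hHy : fderiv ℝ (fderiv ℝ g) y = 0 := hHV y (by simpa [not_le] using hy)
      rw [hHx, hHy, sub_zero, norm_zero (E := (EuclideanSpace ℝ (Fin n) →L[ℝ] EuclideanSpace ℝ (Fin n) →L[ℝ] ℝ))]
      positivity
  -- transfer to the iterated derivative
  have hFlip : ∃ L' : NNReal, LipschitzWith L' (fun x => iteratedFDeriv ℝ 2 g x) := by
    refine ⟨Real.toNNReal LH, LipschitzWith.of_dist_le_mul fun x y => ?_⟩
    rw [dist_eq_norm, Real.coe_toNNReal _ hLH0, dist_eq_norm]
    have step : ‖iteratedFDeriv ℝ 2 g x - iteratedFDeriv ℝ 2 g y‖ ≤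
        ‖fderiv ℝ (fderiv ℝ g) x - fderiv ℝ (fderiv ℝ g) y‖ := by
      apply ContinuousMultilinearMap.opNorm_le_bound
        (norm_nonneg (fderiv ℝ (fderiv ℝ g) x - fderiv ℝ (fderiv ℝ g) y))
      intro m
      have key : (iteratedFDeriv ℝ 2 g x - iteratedFDeriv ℝ 2 g y) m =
          (fderiv ℝ (fderiv ℝ g) x - fderiv ℝ (fderiv ℝ g) y) (m 0) (m 1) := by
        simp [ContinuousMultilinearMap.sub_apply, ContinuousLinearMap.sub_apply,
          iteratedFDeriv_two_apply]
      rw [key]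
      calc ‖(fderiv ℝ (fderiv ℝ g) x - fderiv ℝ (fderiv ℝ g) y) (m 0) (m 1)‖
          ≤ ‖fderiv ℝ (fderiv ℝ g) x - fderiv ℝ (fderiv ℝ g) y‖ * ‖m 0‖ * ‖m 1‖ :=
            ContinuousLinearMap.le_opNorm₂ _ _ _
        _ = ‖fderiv ℝ (fderiv ℝ g) x - fderiv ℝ (fderiv ℝ g) y‖ * ∏ i, ‖m i‖ := by
            rw [Fin.prod_univ_two]; ring
    calc ‖iteratedFDeriv ℝ 2 g x - iteratedFDeriv ℝ 2 g y‖
        ≤ ‖fderiv ℝ (fderiv ℝ g) x - fderiv ℝ (fderiv ℝ g) y‖ := step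
      _ ≤ LH * ‖x - y‖ := hHglob x y
  -- assemble the conclusion
  refine ⟨c/4, by positivity, by linarith, g, hg, hFlip, ?_, ?_, ?_⟩
  · intro x hxK
    have hb0 : 0 ≤ b x := by
      rw [hbdef, orientedDist, if_pos hxK]
      exact Metric.infDist_nonneg
    constructor
    · calc (0:ℝ) = phiAux f 0 := (phiAux_zero f).symm
        _ ≤ phiAux f (b x) := phiAux_mono f hb0
    · calc g x ≤ f.rOut := phiAux_le_rOut f
        _ = c/2 := hrOut
        _ ≤ 1 := by linarith
  · intro x hxK hge
    have h1 : phiAux f (c/4) ≤ phiAux f (b x) := phiAux_mono f hge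
    have h2 : phiAux f (c/4) = c/4 := by
      apply phiAux_eq_self f
      rw [hrIn, abs_of_nonneg (by positivity)]
    have : (0:ℝ) < c/4 := by positivity
    calc (0:ℝ) < c/4 := this
      _ = phiAux f (c/4) := h2.symm
      _ ≤ g x := h1
  · intro x hxK habs
    exact phiAux_eq_self f (by rw [hrIn]; exact habs.le)

end
end

section
/- Closure of the interior under the nondegeneracy condition (3.3): Let K ⊆ ℝⁿ be a nonempty compact set with oriented distance function b_K. Assume that b_K is differentiable at every point x ∈ ∂K and that ∇b_K(x) ≠ 0 for every x ∈ ∂K. Then K coincides with the closure of its interior. -/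
noncomputable section
/-- Closure of the interior under the nondegeneracy condition (3.3): if the oriented
distance function `b_K` of a nonempty compact set `K ⊆ ℝⁿ` is differentiable with nonzero
gradient at every boundary point, then `K` coincides with the closure of its interior. -/
theorem closure_interior_eq_of_nondegenerate
    (n : ℕ) (K : Set (EuclideanSpace ℝ (Fin n)))
    (hKne : K.Nonempty) (hKcpt : IsCompact K)
    (hdiff : ∀ x ∈ frontier K, DifferentiableAt ℝ (orientedDist K) x)
    (hgrad : ∀ x ∈ frontier K, gradient (orientedDist K) x ≠ 0) :
    K = closure (interior K) := by
  have hKcl : IsClosed K := hKcpt.isClosed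
  apply Set.Subset.antisymm _ (closure_minimal interior_subset hKcl)
  intro x hxK
  by_cases hxi : x ∈ interior K
  · exact subset_closure hxi
  -- x is on the frontier
  have hxf : x ∈ frontier K := by
    rw [frontier, hKcl.closure_eq]; exact ⟨hxK, hxi⟩
  set g := gradient (orientedDist K) x with hg
  have hgne : g ≠ 0 := hgrad x hxf
  have hGrad : HasGradientAt (orientedDist K) g x := (hdiff x hxf).hasGradientAt
  have hF : HasFDerivAt (orientedDist K)
      ((InnerProductSpace.toDual ℝ _ ) g) x := hGrad.hasFDerivAt
  -- the curve t ↦ x + t • g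
  set c : ℝ → EuclideanSpace ℝ (Fin n) := fun t => x + t • g with hc
  have hcd : HasDerivAt c g 0 := by
    have h := ((hasDerivAt_id (0:ℝ)).smul_const g).const_add x
    simp only [one_smul] at h
    exact h
  have hc0 : c 0 = x := by simp [hc]
  have hcomp : HasDerivAt (fun t => orientedDist K (c t)) ((inner ℝ g g : ℝ)) 0 := by
    have := (hF.comp_hasDerivAt_of_eq 0 hcd hc0.symm)
    simp only [InnerProductSpace.toDual_apply_apply] at this
    exact this
  -- b x = 0
  have hbx : orientedDist K x = 0 := by
    simp [orientedDist, hxK, Metric.infDist_zero_of_mem hxf]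
  -- positivity of b near x along c for t > 0
  have hpos : ∀ᶠ t in nhdsWithin (0:ℝ) (Set.Ioi 0),
      0 < orientedDist K (c t) := by
    have hslope : Filter.Tendsto (slope (fun t => orientedDist K (c t)) 0)
        (nhdsWithin (0:ℝ) {(0:ℝ)}ᶜ) (nhds ((inner ℝ g g : ℝ))) :=
      hasDerivAt_iff_tendsto_slope.mp hcomp
    have hslope' : Filter.Tendsto (slope (fun t => orientedDist K (c t)) 0)
        (nhdsWithin (0:ℝ) (Set.Ioi 0)) (nhds ((inner ℝ g g : ℝ))) :=
      hslope.mono_left (nhdsWithin_mono 0 (fun t ht => ne_of_gt ht))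
    have hgg : (0:ℝ) < (inner ℝ g g : ℝ) := by
      rw [real_inner_self_eq_norm_sq]
      have := norm_pos_iff.mpr hgne
      positivity
    have hev := hslope'.eventually (eventually_gt_nhds hgg)
    filter_upwards [hev, self_mem_nhdsWithin] with t ht ht0
    have ht' : 0 < t⁻¹ * (orientedDist K (c t) - orientedDist K (c 0)) := by
      simpa [slope_def_field, slope] using ht
    rw [hc0, hbx, sub_zero] at ht'
    have htpos : (0:ℝ) < t := ht0
    nlinarith [mul_pos htpos ht', inv_pos.mpr htpos]
  -- b y > 0 implies y ∈ interior K
  have hint : ∀ y, 0 < orientedDist K y → y ∈ interior K := by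
    intro y hy
    by_cases hyK : y ∈ K
    · have hyinf : 0 < Metric.infDist y (frontier K) := by
        simpa [orientedDist, hyK] using hy
      have hyf : y ∉ frontier K := fun h => by
        simp [Metric.infDist_zero_of_mem h] at hyinf
      have hyc : y ∈ closure K := subset_closure hyK
      by_contra hyi
      exact hyf ⟨hyc, hyi⟩
    · have : orientedDist K y ≤ 0 := by
        simp only [orientedDist, hyK, if_false]
        exact neg_nonpos.mpr Metric.infDist_nonneg
      linarith
  -- conclude
  have hcts : Filter.Tendsto c (nhdsWithin (0:ℝ) (Set.Ioi 0)) (nhds x) := by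
    have : Filter.Tendsto c (nhds 0) (nhds (c 0)) := hcd.continuousAt.tendsto
    rw [hc0] at this
    exact this.mono_left nhdsWithin_le_nhds
  exact mem_closure_of_tendsto hcts
    (hpos.mono fun t ht => hint _ ht)

end
end
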